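/- arXiv:1612.09055 — 2 statements merged into one kernel-verified Lean document; each statement's English description precedes it below -/
import Mathlib

section
/- Let f(x) = e^{i log(1+|x|)} on ℝ, and let μ^t_ε (t ≠ 0 fixed) be the probability measures with density c_ε ρ(c_ε x), where ρ is the standard Gaussian density and c_ε = ε/√(t²+ε⁴). Then the net (⟨μ^t_ε, f⟩)_{ε∈(0,1]} has uncountably many cluster points in ℂ: for every α ∈ [0,2π), 2γe^{iα} is a cluster point, where γ = ∫₀^∞ e^{i log y} ρ(y) dy ≠ 0. -/
/-!
For `c > 0`, substituting `y = c x` and folding the even integrand onto `(0, ∞)` gives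
`∫ e^{i log (1+|x|)} c ρ(c x) dx = 2 e^{-i log c} ∫₀^∞ e^{i log (c + y)} ρ(y) dy`.
By dominated convergence the last integral tends to `γ` as `c → 0`, while the phase
`e^{-i log c}` winds around the unit circle infinitely often: along `c = e^{-α-2πn}` it is
constantly `e^{iα}`. For `t ≠ 0` the map `ε ↦ c_ε` sends `𝓝[>] 0` onto `𝓝[>] 0` (intermediate
value theorem), so these limits are cluster points of the net in `ε`. Finally `γ` is a Mellin
transform of the Gaussian, a nonzero multiple of `Γ((1+i)/2)`.
-/

open MeasureTheory Filter Set Complex Topology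

theorem integral_comp_abs_eq_two_smul {E : Type*} [NormedAddCommGroup E] [NormedSpace ℝ E]
    {f : ℝ → E} (hf : Integrable fun x => f |x|) :
    ∫ x, f |x| = (2 : ℝ) • ∫ x in Ioi 0, f x := by
  have h_Ioi : ∫ x in Ioi 0, f |x| = ∫ x in Ioi 0, f x :=
    setIntegral_congr_fun measurableSet_Ioi fun x hx => by rw [abs_of_pos hx]
  have h_Iic : ∫ x in Iic 0, f |x| = ∫ x in Ioi 0, f |x| := by
    rw [← neg_zero, ← integral_comp_neg_Ioi]
    simp only [abs_neg, neg_zero]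
  rw [← setIntegral_univ, ← Iic_union_Ioi (a := (0 : ℝ)),
    setIntegral_union (Iic_disjoint_Ioi le_rfl) measurableSet_Ioi hf.integrableOn hf.integrableOn,
    h_Iic, h_Ioi, two_smul]

theorem integral_mul_dilate (F : ℝ → ℂ) (ρ : ℝ → ℝ) {c : ℝ} (hc : 0 < c) :
    ∫ x, F x * ((c * ρ (c * x) : ℝ) : ℂ) = ∫ y, F (y / c) * (ρ y : ℂ) := by
  have hc' : (c : ℂ) ≠ 0 := ofReal_ne_zero.2 hc.ne'
  calc ∫ x, F x * ((c * ρ (c * x) : ℝ) : ℂ)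
      = ∫ x, (c : ℂ) * (F (c * x / c) * (ρ (c * x) : ℂ)) := by
        congr 1 with x
        rw [mul_div_cancel_left₀ x hc.ne']
        push_cast
        ring
    _ = |c⁻¹| • ∫ y, (c : ℂ) * (F (y / c) * (ρ y : ℂ)) :=
        Measure.integral_comp_mul_left (fun y => (c : ℂ) * (F (y / c) * (ρ y : ℂ))) c
    _ = ∫ y, F (y / c) * (ρ y : ℂ) := by
        rw [integral_const_mul, abs_of_pos (inv_pos.2 hc), real_smul, ← mul_assoc, ofReal_inv,
          inv_mul_cancel₀ hc', one_mul]

theorem MeasureTheory.Integrable.exp_I_mul_ofReal_mul {α : Type*} [MeasurableSpace α]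
    {μ : Measure α} {φ ρ : α → ℝ} (hφ : Measurable φ) (hρ : Integrable ρ μ) :
    Integrable (fun y => exp (I * φ y) * (ρ y : ℂ)) μ := by
  refine hρ.norm.mono' (by fun_prop) (Eventually.of_forall fun y => ?_)
  rw [norm_mul, norm_exp_I_mul_ofReal, one_mul, norm_real]

theorem exp_I_log_one_add_div {c y : ℝ} (hc : 0 < c) (hy : 0 ≤ y) :
    exp (I * Real.log (1 + y / c)) = exp (-(I * Real.log c)) * exp (I * Real.log (c + y)) := by
  rw [← exp_add, one_add_div hc.ne', Real.log_div (by positivity) hc.ne']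
  push_cast
  ring_nf

theorem integral_exp_I_log_one_add_abs_mul_dilate {ρ : ℝ → ℝ} (hρ_even : ∀ x, ρ (-x) = ρ x)
    (hρ_int : Integrable ρ) {c : ℝ} (hc : 0 < c) :
    ∫ x, exp (I * Real.log (1 + |x|)) * ((c * ρ (c * x) : ℝ) : ℂ)
      = 2 * exp (-(I * Real.log c)) * ∫ y in Ioi 0, exp (I * Real.log (c + y)) * (ρ y : ℂ) := by
  have hρ_abs : ∀ y, ρ |y| = ρ y := fun y => by
    rcases abs_choice y with h | h <;> rw [h]
    exact hρ_even y
  set g : ℝ → ℂ := fun u => exp (I * Real.log (1 + u / c)) * (ρ u : ℂ) with hg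
  have h_even : (fun y => exp (I * Real.log (1 + |y / c|)) * (ρ y : ℂ)) = fun y => g |y| := by
    ext y
    simp only [hg, abs_div, abs_of_pos hc, hρ_abs]
  have hg_int : Integrable fun y => g |y| := by
    rw [← h_even]
    exact hρ_int.exp_I_mul_ofReal_mul (by fun_prop)
  rw [integral_mul_dilate _ _ hc, h_even, integral_comp_abs_eq_two_smul hg_int,
    real_smul, ofReal_ofNat, mul_assoc]
  congr 1
  rw [← integral_const_mul]
  refine setIntegral_congr_fun measurableSet_Ioi fun y (hy : 0 < y) => ?_
  simp only [hg, exp_I_log_one_add_div hc hy.le, mul_assoc]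

theorem continuousAt_setIntegral_exp_I_log_add_mul {ρ : ℝ → ℝ} (hρ : Integrable ρ) :
    ContinuousAt (fun c : ℝ => ∫ y in Ioi 0, exp (I * Real.log (c + y)) * (ρ y : ℂ)) 0 := by
  refine continuousAt_of_dominated (bound := fun y => ‖ρ y‖)
    (Eventually.of_forall fun c =>
      (hρ.integrableOn.exp_I_mul_ofReal_mul (by fun_prop)).aestronglyMeasurable)
    (Eventually.of_forall fun c => Eventually.of_forall fun y => ?_) hρ.norm.integrableOn ?_
  · rw [norm_mul, norm_exp_I_mul_ofReal, one_mul, norm_real]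
  · filter_upwards [ae_restrict_mem measurableSet_Ioi] with y (hy : 0 < y)
    have hy' : (0 : ℝ) + y ≠ 0 := by simpa using hy.ne'
    fun_prop (disch := exact hy')

theorem map_nhdsGT_eq_of_continuousOn {c : ℝ → ℝ} {a : ℝ} (hc : ContinuousOn c (Ici a))
    (hgt : ∀ x, a < x → c a < c x) : map c (𝓝[>] a) = 𝓝[>] (c a) := by
  refine le_antisymm (tendsto_nhdsWithin_iff.2 ⟨?_, eventually_nhdsWithin_of_forall hgt⟩) ?_
  · exact (hc a self_mem_Ici).tendsto.mono_left (nhdsWithin_mono a Ioi_subset_Ici_self)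
  · intro S hS
    obtain ⟨δ, hδ, hsub⟩ := mem_nhdsGT_iff_exists_Ioo_subset.1 (mem_map.1 hS)
    obtain ⟨b, hab, hbδ⟩ := exists_between (mem_Ioi.1 hδ)
    have hIoo : Ioo (c a) (c b) ⊆ S :=
      (intermediate_value_Ioo hab.le (hc.mono Icc_subset_Ici_self)).trans
        (image_subset_iff.2 ((Ioo_subset_Ioo_right hbδ.le).trans hsub))
    exact mem_of_superset (Ioo_mem_nhdsGT (hgt b hab)) hIoo

theorem exp_neg_I_log_exp_neg_add_two_pi_mul (α : ℝ) (n : ℕ) :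
    exp (-(I * Real.log (Real.exp (-(α + 2 * Real.pi * n))))) = exp (I * α) := by
  rw [Real.log_exp, ← mul_one (exp (I * α)), ← exp_nat_mul_two_pi_mul_I n, ← exp_add]
  push_cast
  ring_nf

theorem tendsto_exp_neg_add_two_pi_mul_nhdsGT (α : ℝ) :
    Tendsto (fun n : ℕ => Real.exp (-(α + 2 * Real.pi * n))) atTop (𝓝[>] 0) := by
  refine tendsto_nhdsWithin_iff.2 ⟨Real.tendsto_exp_atBot.comp ?_,
    Eventually.of_forall fun n => Real.exp_pos _⟩
  exact tendsto_neg_atTop_atBot.comp (tendsto_atTop_add_const_left _ _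
    (tendsto_natCast_atTop_atTop.const_mul_atTop (by positivity)))

theorem mapClusterPt_integral_exp_I_log_one_add_abs_mul_dilate {ρ : ℝ → ℝ}
    (hρ_even : ∀ x, ρ (-x) = ρ x) (hρ_int : Integrable ρ) (α : ℝ) :
    MapClusterPt (2 * (∫ y in Ioi 0, exp (I * Real.log y) * (ρ y : ℂ)) * exp (I * α)) (𝓝[>] 0)
      fun c : ℝ => ∫ x, exp (I * Real.log (1 + |x|)) * ((c * ρ (c * x) : ℝ) : ℂ) := by
  have hr := tendsto_exp_neg_add_two_pi_mul_nhdsGT α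
  have hJr := (continuousAt_setIntegral_exp_I_log_add_mul hρ_int).tendsto.comp
    (tendsto_nhdsWithin_iff.1 hr).1
  simp only [zero_add] at hJr
  refine MapClusterPt.of_comp hr (Tendsto.mapClusterPt ?_)
  convert hJr.const_mul (2 * exp (I * α)) using 2 with n
  · simp only [Function.comp_apply]
    rw [integral_exp_I_log_one_add_abs_mul_dilate hρ_even hρ_int (Real.exp_pos _),
      exp_neg_I_log_exp_neg_add_two_pi_mul]
  · ring

theorem map_div_sqrt_sq_add_pow_four_nhdsGT {t : ℝ} (ht : t ≠ 0) :
    map (fun ε => ε / Real.sqrt (t ^ 2 + ε ^ 4)) (𝓝[>] 0) = 𝓝[>] 0 := by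
  have h_cont : Continuous fun ε : ℝ => ε / Real.sqrt (t ^ 2 + ε ^ 4) := by
    fun_prop (disch := exact fun ε => (Real.sqrt_pos.2 (by positivity)).ne')
  simpa using map_nhdsGT_eq_of_continuousOn (a := 0) h_cont.continuousOn
    fun ε hε => by simp only [zero_div]; positivity

theorem mellin_exp_neg_sq_div_two {s : ℂ} (hs : 0 < s.re) :
    mellin (fun y : ℝ => ((Real.exp (-(y ^ 2) / 2) : ℝ) : ℂ)) s
      = 2⁻¹ * 2 ^ (s / 2) * Gamma (s / 2) := by
  have h_sq := mellin_comp_rpow (fun u : ℝ => ((Real.exp (-(u * 2⁻¹)) : ℝ) : ℂ)) s 2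
  have h_half := mellin_comp_mul_right (fun u : ℝ => ((Real.exp (-u) : ℝ) : ℂ)) (s / 2)
    (a := 2⁻¹) (by norm_num)
  simp only [Real.rpow_two, ← div_eq_mul_inv, ← neg_div, ofReal_ofNat, ofReal_inv] at h_sq h_half
  rw [h_sq, h_half, ← GammaIntegral_eq_mellin, ← Gamma_eq_integral (by simpa using hs),
    inv_cpow _ _ (by simp [Real.pi_ne_zero.symm]), ← cpow_neg, neg_div, neg_neg]
  norm_num [smul_eq_mul, mul_assoc]

theorem setIntegral_exp_I_log_mul_gaussian :
    ∫ y in Ioi (0 : ℝ), exp (I * Real.log y) *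
        ((Real.exp (-(y ^ 2) / 2) / Real.sqrt (2 * Real.pi) : ℝ) : ℂ)
      = 2⁻¹ * 2 ^ ((1 + I) / 2) * Gamma ((1 + I) / 2) / Real.sqrt (2 * Real.pi) := by
  rw [← mellin_exp_neg_sq_div_two (by simp), mellin, ← integral_div]
  refine setIntegral_congr_fun measurableSet_Ioi fun y (hy : 0 < y) => ?_
  rw [add_sub_cancel_left, cpow_def_of_ne_zero (ofReal_ne_zero.2 hy.ne'), ← ofReal_log hy.le,
    smul_eq_mul]
  push_cast
  ring_nf

/-- with `f(x) = e^{i log(1+|x|)}` and `μ^t_ε` the probability measures with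
Gaussian density `c_ε ρ(c_ε x)`, `c_ε = ε/√(t²+ε⁴)`, the net `⟨μ^t_ε, f⟩` has, for every
`α ∈ [0,2π)`, the cluster point `2γe^{iα}`, where `γ = ∫₀^∞ e^{i log y} ρ(y) dy ≠ 0`. -/
theorem uncountably_many_cluster_points
    (ρ : ℝ → ℝ) (hρ : ∀ x, ρ x = Real.exp (-(x ^ 2) / 2) / Real.sqrt (2 * Real.pi))
    (t : ℝ) (ht : t ≠ 0)
    (γ : ℂ) (hγ : γ = ∫ y in Set.Ioi (0 : ℝ), Complex.exp (Complex.I * Real.log y) * (ρ y : ℂ)) :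
    γ ≠ 0 ∧
    ∀ α : ℝ, α ∈ Set.Ico (0 : ℝ) (2 * Real.pi) →
      MapClusterPt (2 * γ * Complex.exp (Complex.I * (α : ℂ)))
        (nhdsWithin (0 : ℝ) (Set.Ioi 0))
        (fun ε : ℝ => ∫ x : ℝ, Complex.exp (Complex.I * Real.log (1 + |x|)) *
          (((ε / Real.sqrt (t ^ 2 + ε ^ 4)) * ρ ((ε / Real.sqrt (t ^ 2 + ε ^ 4)) * x) : ℝ) : ℂ)) := by
  have hρ_even : ∀ x, ρ (-x) = ρ x := fun x => by simp only [hρ, neg_sq]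
  have hρ_int : Integrable ρ := by
    rw [show ρ = fun x => Real.exp (-(1 / 2) * x ^ 2) / Real.sqrt (2 * Real.pi) from
      funext fun x => by rw [hρ]; ring_nf]
    exact (integrable_exp_neg_mul_sq (by norm_num)).div_const _
  refine ⟨?_, fun α _ => ?_⟩
  · simp_rw [hρ] at hγ
    rw [hγ, setIntegral_exp_I_log_mul_gaussian]
    have hΓ : Gamma ((1 + I) / 2) ≠ 0 := Gamma_ne_zero_of_re_pos (by simp)
    simp [hΓ, cpow_eq_zero_iff, (Real.sqrt_pos.2 Real.pi_pos).ne']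
  have h := mapClusterPt_integral_exp_I_log_one_add_abs_mul_dilate hρ_even hρ_int α
  rw [← map_div_sqrt_sq_add_pow_four_nhdsGT ht, ← hγ] at h
  exact mapClusterPt_comp.2 h
end

section
/- For every almost periodic function f on ℝ, the mean m(f) = lim_{R→∞}(1/(2R))∫_{−R}^R f(x)dx exists and also equals lim_{R→∞}(1/R)∫_0^R f(x)dx. -/
open MeasureTheory Filter

noncomputable section

/-- A trigonometric polynomial on `ℝ`. -/
def IsTrigPoly (p : ℝ → ℂ) : Prop :=
  ∃ (m : ℕ) (a : Fin m → ℂ) (ξ : Fin m → ℝ),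
    ∀ x, p x = ∑ j, a j * Complex.exp (Complex.I * x * ξ j)

/-- Almost periodic functions: uniform limits of trigonometric polynomials. -/
def IsAlmostPeriodic (f : ℝ → ℂ) : Prop :=
  ∀ δ : ℝ, 0 < δ → ∃ p : ℝ → ℂ, IsTrigPoly p ∧ ∀ x, ‖f x - p x‖ ≤ δ

/-! The average of `x ↦ exp (i ξ x)` over `[a, b]` is `1` for `ξ = 0` and `O(1 / (|ξ| (b - a)))`
otherwise, so the averages of a trigonometric polynomial over windows `[a, b]` converge as
`b - a → ∞`, wherever the windows sit. Averaging is `1`-Lipschitz for the sup norm, so for an almost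
periodic `f` these averages are, for every `ε`, eventually `ε`-close to a constant: they form a
Cauchy filter. Its limit is the mean, and both `[-R, R]` and `[0, R]` are windows of length
tending to infinity. -/

open Topology

theorem exists_tendsto_of_forall_exists_eventually_dist_le {α X : Type*} [MetricSpace X]
    [CompleteSpace X] {l : Filter α} [l.NeBot] {g : α → X}
    (h : ∀ ε > 0, ∃ c, ∀ᶠ t in l, dist (g t) c ≤ ε) : ∃ M, Tendsto g l (𝓝 M) := by
  refine cauchy_map_iff_exists_tendsto.1 (Metric.cauchy_iff.2 ⟨inferInstance, fun ε hε => ?_⟩)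
  obtain ⟨c, hc⟩ := h (ε / 3) (by positivity)
  refine ⟨g '' {t | dist (g t) c ≤ ε / 3}, image_mem_map hc, ?_⟩
  rintro _ ⟨s, hs, rfl⟩ _ ⟨t, ht, rfl⟩
  linarith [dist_triangle_right (g s) (g t) c, hs.out, ht.out]

section IntervalAverage

variable {E : Type*} [NormedAddCommGroup E] [NormedSpace ℝ E]

theorem norm_interval_average_le {f : ℝ → E} {C : ℝ} (hC : ∀ x, ‖f x‖ ≤ C) (a b : ℝ) :
    ‖⨍ x in a..b, f x‖ ≤ C := by
  rcases eq_or_ne a b with rfl | hab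
  · simpa using (norm_nonneg _).trans (hC 0)
  have hab' : 0 < |b - a| := abs_pos.2 (sub_ne_zero.2 hab.symm)
  rw [interval_average_eq, norm_smul, norm_inv, Real.norm_eq_abs, inv_mul_le_iff₀ hab', mul_comm]
  exact intervalIntegral.norm_integral_le_of_norm_le_const fun x _ => hC x

theorem interval_average_sub {f g : ℝ → E} {a b : ℝ} (hf : IntervalIntegrable f volume a b)
    (hg : IntervalIntegrable g volume a b) :
    ⨍ x in a..b, (f x - g x) = (⨍ x in a..b, f x) - ⨍ x in a..b, g x := by
  simp only [interval_average_eq, intervalIntegral.integral_sub hf hg, smul_sub]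

theorem interval_average_sum_mul {𝕜 ι : Type*} [RCLike 𝕜] (s : Finset ι) (c : ι → 𝕜)
    {g : ι → ℝ → 𝕜} {a b : ℝ} (hg : ∀ i ∈ s, IntervalIntegrable (g i) volume a b) :
    ⨍ x in a..b, ∑ i ∈ s, c i * g i x = ∑ i ∈ s, c i * ⨍ x in a..b, g i x := by
  simp only [interval_average_eq,
    intervalIntegral.integral_finsetSum fun i hi => (hg i hi).const_mul (c i),
    intervalIntegral.integral_const_mul, Finset.smul_sum, mul_smul_comm]

theorem interval_average_eq_one_div_mul (f : ℝ → ℂ) (a b : ℝ) :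
    ⨍ x in a..b, f x = (1 / ((b : ℂ) - a)) * ∫ x in a..b, f x := by
  rw [interval_average_eq, Complex.real_smul]
  push_cast
  ring

end IntervalAverage

/-- A point `w : ℝ × ℝ` stands for the window `[w.1, w.2]`; this filter lets its length tend to
infinity while its position is arbitrary. -/
def lengthAtTop : Filter (ℝ × ℝ) :=
  comap (fun w => w.2 - w.1) atTop

instance : lengthAtTop.NeBot :=
  atTop_neBot.comap_of_surj fun r => ⟨(0, r), sub_zero r⟩

theorem tendsto_length_lengthAtTop : Tendsto (fun w : ℝ × ℝ => w.2 - w.1) lengthAtTop atTop :=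
  tendsto_comap

theorem norm_integral_exp_mul_I_le {ξ : ℝ} (hξ : ξ ≠ 0) (a b : ℝ) :
    ‖∫ x in a..b, Complex.exp (Complex.I * x * ξ)‖ ≤ 2 / |ξ| := by
  have hc : (ξ * Complex.I : ℂ) ≠ 0 := mul_ne_zero (Complex.ofReal_ne_zero.2 hξ) Complex.I_ne_zero
  have hexp : ∀ x : ℝ, Complex.exp (Complex.I * x * ξ) = Complex.exp (ξ * Complex.I * x) :=
    fun x => by ring_nf
  simp_rw [hexp, integral_exp_mul_complex hc, norm_div, norm_mul, Complex.norm_real,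
    Complex.norm_I, mul_one, Real.norm_eq_abs]
  gcongr
  exact (norm_sub_le _ _).trans (by norm_num [Complex.norm_exp])

theorem tendsto_interval_average_exp_mul_I (ξ : ℝ) :
    Tendsto (fun w : ℝ × ℝ => ⨍ x in w.1..w.2, Complex.exp (Complex.I * x * ξ)) lengthAtTop
      (𝓝 (if ξ = 0 then 1 else 0)) := by
  by_cases hξ : ξ = 0
  · subst hξ
    simp only [Complex.ofReal_zero, mul_zero, Complex.exp_zero, if_true]
    refine tendsto_const_nhds.congr' ?_
    filter_upwards [tendsto_length_lengthAtTop.eventually_gt_atTop 0] with w hw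
    rw [interval_average_eq, intervalIntegral.integral_const, smul_smul, inv_mul_cancel₀ hw.ne',
      one_smul]
  · rw [if_neg hξ]
    have hbound : Tendsto (fun w : ℝ × ℝ => |w.2 - w.1|⁻¹ * (2 / |ξ|)) lengthAtTop (𝓝 0) := by
      simpa using (tendsto_inv_atTop_zero.comp
        (tendsto_abs_atTop_atTop.comp tendsto_length_lengthAtTop)).mul_const (2 / |ξ|)
    refine squeeze_zero_norm (fun w => ?_) hbound
    rw [interval_average_eq, norm_smul, norm_inv, Real.norm_eq_abs]
    gcongr
    exact norm_integral_exp_mul_I_le hξ _ _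

theorem IsTrigPoly.continuous {p : ℝ → ℂ} (hp : IsTrigPoly p) : Continuous p := by
  obtain ⟨m, c, ξ, hp⟩ := hp
  rw [funext hp]
  fun_prop

theorem IsTrigPoly.exists_tendsto_interval_average {p : ℝ → ℂ} (hp : IsTrigPoly p) :
    ∃ M : ℂ, Tendsto (fun w : ℝ × ℝ => ⨍ x in w.1..w.2, p x) lengthAtTop (𝓝 M) := by
  obtain ⟨m, c, ξ, hp⟩ := hp
  refine ⟨∑ j, c j * if ξ j = 0 then 1 else 0, ?_⟩
  simp_rw [hp, interval_average_sum_mul _ _ fun j _ => (by fun_prop : Continuous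
    fun x : ℝ => Complex.exp (Complex.I * x * ξ j)).intervalIntegrable _ _]
  exact tendsto_finsetSum _ fun j _ => (tendsto_interval_average_exp_mul_I (ξ j)).const_mul _

theorem IsAlmostPeriodic.continuous {f : ℝ → ℂ} (hf : IsAlmostPeriodic f) : Continuous f := by
  refine continuous_of_uniform_approx_of_continuous fun u hu => ?_
  obtain ⟨ε, hε, hεu⟩ := Metric.mem_uniformity_dist.1 hu
  obtain ⟨p, hp, hfp⟩ := hf (ε / 2) (half_pos hε)
  exact ⟨p, hp.continuous, fun x => hεu <| by
    rw [dist_eq_norm]; exact (hfp x).trans_lt (half_lt_self hε)⟩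

theorem IsAlmostPeriodic.exists_eventually_dist_interval_average_le {f : ℝ → ℂ}
    (hf : IsAlmostPeriodic f) {ε : ℝ} (hε : 0 < ε) :
    ∃ c : ℂ, ∀ᶠ w in lengthAtTop, dist (⨍ x in w.1..w.2, f x) c ≤ ε := by
  obtain ⟨p, hp, hfp⟩ := hf (ε / 2) (half_pos hε)
  obtain ⟨c, hc⟩ := hp.exists_tendsto_interval_average
  refine ⟨c, ?_⟩
  filter_upwards [hc.eventually (Metric.closedBall_mem_nhds c (half_pos hε))] with w hw
  have hfp_avg : dist (⨍ x in w.1..w.2, f x) (⨍ x in w.1..w.2, p x) ≤ ε / 2 := by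
    rw [dist_eq_norm, ← interval_average_sub (hf.continuous.intervalIntegrable _ _)
      (hp.continuous.intervalIntegrable _ _)]
    exact norm_interval_average_le hfp _ _
  linarith [dist_triangle (⨍ x in w.1..w.2, f x) (⨍ x in w.1..w.2, p x) c,
    Metric.mem_closedBall.1 hw]

theorem IsAlmostPeriodic.exists_tendsto_interval_average {f : ℝ → ℂ} (hf : IsAlmostPeriodic f) :
    ∃ M : ℂ, Tendsto (fun w : ℝ × ℝ => ⨍ x in w.1..w.2, f x) lengthAtTop (𝓝 M) :=
  exists_tendsto_of_forall_exists_eventually_dist_le fun _ hε =>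
    hf.exists_eventually_dist_interval_average_le hε

theorem almost_periodic_mean_exists_general
    (f : ℝ → ℂ) (hf : IsAlmostPeriodic f) :
    ∃ M : ℂ,
      Tendsto (fun R : ℝ => (1 / (2 * R) : ℂ) * ∫ x in (-R)..R, f x) atTop (nhds M) ∧
      Tendsto (fun R : ℝ => (1 / R : ℂ) * ∫ x in (0:ℝ)..R, f x) atTop (nhds M) := by
  obtain ⟨M, hM⟩ := hf.exists_tendsto_interval_average
  have hsym : Tendsto (fun R : ℝ => (-R, R)) atTop lengthAtTop := by
    refine tendsto_comap_iff.2 ?_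
    simpa [Function.comp_def, ← two_mul] using tendsto_id.const_mul_atTop two_pos
  have hone : Tendsto (fun R : ℝ => (0, R)) atTop lengthAtTop :=
    tendsto_comap_iff.2 <| tendsto_id.congr fun R => (sub_zero R).symm
  refine ⟨M, (hM.comp hsym).congr fun R => ?_, (hM.comp hone).congr fun R => ?_⟩ <;>
  · simp only [Function.comp_apply, interval_average_eq_one_div_mul]
    push_cast
    ring

/-- every almost periodic function on `ℝ` possesses a mean
`m(f) = lim_{R→∞} (1/(2R)) ∫_{-R}^R f`, which also equals `lim_{R→∞} (1/R) ∫_0^R f`. -/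
theorem almost_periodic_mean_exists
    (f : ℝ → ℂ) (hf_cont : Continuous f) (hf : IsAlmostPeriodic f) :
    ∃ M : ℂ,
      Tendsto (fun R : ℝ => (1 / (2 * R) : ℂ) * ∫ x in (-R)..R, f x) atTop (nhds M) ∧
      Tendsto (fun R : ℝ => (1 / R : ℂ) * ∫ x in (0:ℝ)..R, f x) atTop (nhds M) :=
  almost_periodic_mean_exists_general f hf
end
end
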